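/- Consider the three-circle configuration with parameter r₀ ∈ (0,1). For every sequence ξ : ℕ → {1,2,3} with ξ_n ≠ ξ_{n+1} for all n ∈ ℕ, there exists a sequence of points (q_n)_{n∈ℕ} with q_n ∈ C^{ξ_n} for every n, such that: (i) for every n ∈ ℕ the open segment {(1−s)·q_n + s·q_{n+1} : s ∈ (0,1)} is disjoint from each of the closed disks {q ∈ ℝ² : ‖q − c_j‖ ≤ r₀}, j ∈ {1,2,3}; and (ii) for every n ≥ 1 the reflection law holds at q_n: setting u_n = (q_{n+1} − q_n)/‖q_{n+1} − q_n‖ and ν_n = (q_n − c_{ξ_n})/r₀, one has u_n = u_{n−1} − 2·⟨u_{n−1}, ν_n⟩·ν_n. In other words, there is a billiard geodesic which bounces successively on the circles C^{ξ₀}, C^{ξ₁}, …, C^{ξ_n}, … -/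

import Mathlib

open scoped RealInnerProductSpace

/-- A three-circle configuration with parameter `r₀ ∈ (0,1)`: three circles of radius `r₀`
whose centers form an equilateral triangle of side length `1 + 2r₀`. -/
def ThreeCircleConfig (r₀ : ℝ) (c : Fin 3 → EuclideanSpace ℝ (Fin 2)) : Prop :=
  0 < r₀ ∧ r₀ < 1 ∧ ∀ i j, i ≠ j → dist (c i) (c j) = 1 + 2 * r₀

noncomputable section BilliardAux
local notation "E" => EuclideanSpace ℝ (Fin 2)

def rot2d (z : E) : E := (WithLp.equiv 2 (Fin 2 → ℝ)).symm ![-z 1, z 0]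

lemma rot0 (z : E) : rot2d z 0 = -z 1 := rfl

lemma rot1 (z : E) : rot2d z 1 = z 0 := rfl

lemma inner_rot_self (z : E) : ⟪z, rot2d z⟫ = 0 := by
  simp only [PiLp.inner_apply, Fin.sum_univ_two, RCLike.inner_apply, starRingEnd_apply,
    star_trivial, rot0, rot1]
  ring

lemma inner_rot_rot (z : E) : ⟪rot2d z, rot2d z⟫ = ⟪z, z⟫ := by
  simp only [PiLp.inner_apply, Fin.sum_univ_two, RCLike.inner_apply, starRingEnd_apply,
    star_trivial, rot0, rot1]
  ring

lemma two_dim_decomp (z w : E) (h : ⟪w, rot2d z⟫ = 0) :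
    ⟪z, z⟫ • w = ⟪w, z⟫ • z := by
  simp only [PiLp.inner_apply, Fin.sum_univ_two, RCLike.inner_apply, starRingEnd_apply,
    star_trivial] at h ⊢
  have h0 : rot2d z 0 = -z 1 := rfl
  have h1 : rot2d z 1 = z 0 := rfl
  rw [h0, h1] at h
  ext i
  fin_cases i <;> simp only [PiLp.smul_apply, smul_eq_mul, Fin.mk_zero, Fin.mk_one, Fin.isValue]
  · linear_combination (-z 1) * h
  · linear_combination (z 0) * h

lemma norm_eq_of_sq_eq {x : E} {r : ℝ} (h : ‖x‖^2 = r^2) (hr : 0 ≤ r) : ‖x‖ = r := by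
  have h3 : (‖x‖ - r) * (‖x‖ + r) = 0 := by nlinarith
  rcases mul_eq_zero.1 h3 with h | h
  · linarith
  · nlinarith [norm_nonneg x]

/-- derivative of distance to a point along a curve -/

lemma hasDerivAt_norm_curve (γ : ℝ → E) (τ : E) (a : E) (hγ : HasDerivAt γ τ 0)
    (hne : γ 0 ≠ a) :
    HasDerivAt (fun t => ‖γ t - a‖) (⟪γ 0 - a, τ⟫ / ‖γ 0 - a‖) 0 := by
  have hsub : HasDerivAt (fun t => γ t - a) τ 0 := hγ.sub_const a
  have hg : HasDerivAt (fun t => ⟪γ t - a, γ t - a⟫) (⟪γ 0 - a, τ⟫ + ⟪τ, γ 0 - a⟫) 0 :=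
    hsub.inner ℝ hsub
  have hpos : (0:ℝ) < ‖γ 0 - a‖ := by rw [norm_pos_iff]; exact sub_ne_zero.2 hne
  have hg0 : ⟪γ 0 - a, γ 0 - a⟫ = ‖γ 0 - a‖^2 := real_inner_self_eq_norm_sq _
  have hne0 : ⟪γ 0 - a, γ 0 - a⟫ ≠ 0 := by rw [hg0]; positivity
  have hs := (Real.hasDerivAt_sqrt hne0).comp 0 hg
  have heq : (fun t => Real.sqrt ⟪γ t - a, γ t - a⟫) = fun t => ‖γ t - a‖ := by
    funext t; rw [real_inner_self_eq_norm_sq, Real.sqrt_sq (norm_nonneg _)]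
  simp only [Function.comp_def] at hs
  rw [heq] at hs
  refine hs.congr_deriv ?_
  rw [hg0, Real.sqrt_sq (norm_nonneg _), real_inner_comm τ (γ 0 - a)]
  field_simp
  ring

lemma exit_lemma {r : ℝ} (hr : 0 < r) (c₀ p y : E) (hp : ‖p - c₀‖ = r) (hne : y ≠ p)
    (hout : 0 ≤ ⟪p - c₀, y - p⟫) {s : ℝ} (hs : 0 < s) (hs1 : s ≤ 1) :
    r < ‖p + s • (y - p) - c₀‖ := by
  have hx : p + s • (y - p) - c₀ = (p - c₀) + s • (y - p) := by abel
  have hsq : ‖p + s • (y - p) - c₀‖^2 = r^2 + 2*s*⟪p - c₀, y - p⟫ + s^2*‖y - p‖^2 := by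
    rw [hx, norm_add_sq_real, hp, real_inner_smul_right, norm_smul, Real.norm_of_nonneg hs.le]
    ring
  have hyp : 0 < ‖y - p‖ := by
    rw [norm_pos_iff]; exact sub_ne_zero.2 hne
  nlinarith [norm_nonneg (p + s • (y - p) - c₀),
    mul_nonneg (mul_nonneg (by norm_num : (0:ℝ) ≤ 2) hs.le) hout,
    mul_pos (pow_pos hs 2) (pow_pos hyp 2)]

section geomAux
variable {r₀ : ℝ} {c : Fin 3 → E}

/-- points of another circle are far from this center -/
lemma far (hr : 0 < r₀) (hd : ∀ i j, i ≠ j → dist (c i) (c j) = 1 + 2 * r₀)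
    {i j : Fin 3} (hij : i ≠ j) {x : E} (hx : dist x (c i) = r₀) :
    r₀ + 1 ≤ ‖x - c j‖ := by
  have h1 : dist (c i) (c j) ≤ dist (c i) x + dist x (c j) := dist_triangle _ _ _
  rw [hd i j hij, dist_comm (c i) x, hx] at h1
  rw [← dist_eq_norm]
  linarith

lemma nocross (hr : 0 < r₀) (hr1 : r₀ < 1)
    (hd : ∀ i j, i ≠ j → dist (c i) (c j) = 1 + 2 * r₀)
    {i j k : Fin 3} (hik : i ≠ k) (hjk : j ≠ k) {p p' x : E}
    (hp : dist p (c i) = r₀) (hp' : dist p' (c j) = r₀)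
    (hx : x ∈ segment ℝ p p') : r₀ < dist x (c k) := by
  rcases eq_or_ne i j with rfl | hij
  · -- same circle: x in closed ball i, far from c k
    have hball : x ∈ Metric.closedBall (c i) r₀ := by
      refine (convex_closedBall (c i) r₀).segment_subset ?_ ?_ hx
      · exact Metric.mem_closedBall.2 hp.le
      · exact Metric.mem_closedBall.2 hp'.le
    have h1 : dist (c i) (c k) ≤ dist (c i) x + dist x (c k) := dist_triangle _ _ _
    rw [hd i k hik] at h1
    have h2 : dist (c i) x ≤ r₀ := by rw [dist_comm]; exact Metric.mem_closedBall.1 hball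
    linarith
  · obtain ⟨a, b, ha, hb, hab, rfl⟩ := hx
    set M : E := a • (c i) + b • (c j) - c k with hM
    have hMx : (a • p + b • p') - c k = a • (p - c i) + b • (p' - c j) + M := by
      rw [hM]; module
    have hMnorm : 2 * r₀ < ‖M‖ := by
      have hd2 : ‖M‖ ^ 2 = a^2 * ‖c i - c k‖^2 + b^2 * ‖c j - c k‖^2
          + 2*a*b*⟪c i - c k, c j - c k⟫ := by
        have : M = a • (c i - c k) + b • (c j - c k) := by
          rw [hM]; rw [show (b:ℝ) = 1 - a by linarith]; module
        rw [this, norm_add_sq_real, norm_smul, norm_smul, real_inner_smul_left,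
          real_inner_smul_right]
        simp [abs_of_nonneg ha, abs_of_nonneg hb]
        ring
      have hik' : ‖c i - c k‖ = 1 + 2*r₀ := by rw [← dist_eq_norm]; exact hd i k hik
      have hjk' : ‖c j - c k‖ = 1 + 2*r₀ := by rw [← dist_eq_norm]; exact hd j k hjk
      have hij' : ‖c i - c j‖ = 1 + 2*r₀ := by rw [← dist_eq_norm]; exact hd i j hij
      have hinner : ⟪c i - c k, c j - c k⟫ = (1+2*r₀)^2 / 2 := by
        have hsub : ‖(c i - c k) - (c j - c k)‖^2
            = ‖c i - c k‖^2 - 2*⟪c i - c k, c j - c k⟫ + ‖c j - c k‖^2 := by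
          rw [norm_sub_sq_real]
        have : (c i - c k) - (c j - c k) = c i - c j := by abel
        rw [this, hij', hik', hjk'] at hsub
        linarith
      rw [hik', hjk', hinner] at hd2
      have hM2 : ‖M‖^2 = (1+2*r₀)^2 * (1 - a*b) := by
        rw [hd2, show b = 1-a from by linarith]; ring
      have habq : a * b ≤ 1/4 := by nlinarith [sq_nonneg (a-b)]
      have : (2*r₀)^2 < ‖M‖^2 := by rw [hM2]; nlinarith
      nlinarith [norm_nonneg M, hr]
    have h2 : ‖a • (p - c i) + b • (p' - c j)‖ ≤ r₀ := by
      calc ‖a • (p - c i) + b • (p' - c j)‖ ≤ ‖a • (p - c i)‖ + ‖b • (p' - c j)‖ :=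
            norm_add_le _ _
        _ = a * r₀ + b * r₀ := by
            rw [norm_smul, norm_smul, Real.norm_of_nonneg ha, Real.norm_of_nonneg hb,
              show ‖p - c i‖ = r₀ from by rw [← dist_eq_norm]; exact hp,
              show ‖p' - c j‖ = r₀ from by rw [← dist_eq_norm]; exact hp']
        _ = r₀ := by rw [← add_mul, hab, one_mul]
    have h3 : ‖M‖ ≤ dist (a • p + b • p') (c k) + r₀ := by
      have he : M = (a • p + b • p' - c k) - (a • (p - c i) + b • (p' - c j)) := by
        rw [hMx]; abel
      calc ‖M‖ ≤ ‖a • p + b • p' - c k‖ + ‖a • (p - c i) + b • (p' - c j)‖ := by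
            rw [he]; exact norm_sub_le _ _
        _ ≤ dist (a • p + b • p') (c k) + r₀ := by rw [dist_eq_norm]; linarith
    linarith
lemma circles_apart (hr : 0 < r₀) (hd : ∀ i j, i ≠ j → dist (c i) (c j) = 1 + 2 * r₀)
    {i j : Fin 3} (hij : i ≠ j) {p p' : E}
    (hp : dist p (c i) = r₀) (hp' : dist p' (c j) = r₀) : 1 ≤ dist p p' := by
  have h := dist_triangle4 (c i) p p' (c j)
  rw [hd i j hij, dist_comm (c i) p, hp, hp'] at h
  linarith

lemma seg_strict (hr : 0 < r₀) (hr1 : r₀ < 1)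
    (hd : ∀ i j, i ≠ j → dist (c i) (c j) = 1 + 2 * r₀)
    {i j : Fin 3} (hij : i ≠ j) {p p' : E}
    (hp : dist p (c i) = r₀) (hp' : dist p' (c j) = r₀)
    (h1 : 0 ≤ ⟪p - c i, p' - p⟫) (h2 : 0 ≤ ⟪p' - c j, p - p'⟫)
    {s : ℝ} (hs : s ∈ Set.Ioo (0:ℝ) 1) (k : Fin 3) :
    r₀ < dist ((1 - s) • p + s • p') (c k) := by
  obtain ⟨hs0, hs1⟩ := hs
  have hne : p' ≠ p := by
    intro h; have := circles_apart hr hd hij hp hp'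
    rw [h] at this; simp at this; linarith
  rcases eq_or_ne k i with rfl | hki
  · have hx : (1 - s) • p + s • p' = p + s • (p' - p) := by module
    rw [hx, dist_eq_norm]
    exact exit_lemma hr _ _ _ (by rw [← dist_eq_norm]; exact hp) hne h1 hs0 hs1.le
  rcases eq_or_ne k j with rfl | hkj
  · have hx : (1 - s) • p + s • p' = p' + (1 - s) • (p - p') := by module
    rw [hx, dist_eq_norm]
    exact exit_lemma hr _ _ _ (by rw [← dist_eq_norm]; exact hp') hne.symm h2
      (by linarith) (by linarith)
  · exact nocross hr hr1 hd hki.symm hkj.symm hp hp'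
      ⟨1 - s, s, by linarith, hs0.le, by ring, rfl⟩
end geomAux

lemma min_outgoing {r : ℝ} (hr : 0 < r) (c₀ a b q : E)
    (hq : ‖q - c₀‖ = r) (hb : r < ‖b - c₀‖)
    (hseg : ∀ x ∈ segment ℝ a b, r < ‖x - c₀‖)
    (hmin : ∀ p : E, ‖p - c₀‖ = r → ‖q - a‖ + ‖q - b‖ ≤ ‖p - a‖ + ‖p - b‖) :
    0 ≤ ⟪q - c₀, b - q⟫ := by
  by_contra hcon
  push_neg at hcon
  have hbq : b ≠ q := by intro h; rw [h, hq] at hb; exact lt_irrefl _ hb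
  set A : ℝ := ‖b - q‖^2 with hA_def
  set B : ℝ := ⟪q - c₀, b - q⟫ with hB_def
  have hA : 0 < A := by
    apply pow_pos; rw [norm_pos_iff]; exact sub_ne_zero.2 hbq
  have hAB : r^2 + 2*B + A = ‖b - c₀‖^2 := by
    have : b - c₀ = (q - c₀) + (b - q) := by abel
    rw [this, norm_add_sq_real, hq]
  set s₀ : ℝ := -2*B/A with hs₀_def
  have hs₀pos : 0 < s₀ := div_pos (by linarith) hA
  have hs₀1 : s₀ < 1 := by
    rw [hs₀_def, div_lt_one hA]
    nlinarith [hb, norm_nonneg (b - c₀), hr]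
  set q' : E := q + s₀ • (b - q) with hq'_def
  have hq'c : ‖q' - c₀‖ = r := by
    have hsq : ‖q' - c₀‖^2 = r^2 + 2*s₀*B + s₀^2*A := by
      have hx : q' - c₀ = (q - c₀) + s₀ • (b - q) := by rw [hq'_def]; abel
      rw [hx, norm_add_sq_real, hq, real_inner_smul_right, norm_smul,
        Real.norm_of_nonneg hs₀pos.le]
      ring
    have hz : 2*s₀*B + s₀^2*A = 0 := by
      rw [hs₀_def]; field_simp; ring
    have h2 : ‖q' - c₀‖^2 = r^2 := by rw [hsq]; linarith
    have h3 : (‖q' - c₀‖ - r) * (‖q' - c₀‖ + r) = 0 := by nlinarith [h2]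
    rcases mul_eq_zero.1 h3 with h | h
    · linarith
    · nlinarith [norm_nonneg (q' - c₀)]
  have hd1 : ‖q' - b‖ = (1 - s₀) * ‖b - q‖ := by
    have : q' - b = (1 - s₀) • (q - b) := by rw [hq'_def]; module
    rw [this, norm_smul, Real.norm_of_nonneg (by linarith), norm_sub_rev]
  have hd2 : ‖q' - q‖ = s₀ * ‖b - q‖ := by
    have : q' - q = s₀ • (b - q) := by rw [hq'_def]; abel
    rw [this, norm_smul, Real.norm_of_nonneg hs₀pos.le]
  have hmin' := hmin q' hq'c
  have htri : ‖q' - a‖ ≤ ‖q' - q‖ + ‖q - a‖ := norm_sub_le_norm_sub_add_norm_sub q' q a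
  have heq : dist a q + dist q q' = dist a q' := by
    have h1 : dist a q' ≤ dist a q + dist q q' := dist_triangle a q q'
    have h2 : dist a q + dist q q' ≤ dist a q' := by
      simp only [dist_eq_norm]
      have e1 : ‖a - q‖ = ‖q - a‖ := norm_sub_rev a q
      have e2 : ‖a - q'‖ = ‖q' - a‖ := norm_sub_rev a q'
      have e3 : ‖q - q'‖ = ‖q' - q‖ := norm_sub_rev q q'
      have e4 : ‖q - b‖ = ‖b - q‖ := norm_sub_rev q b
      rw [e1, e2, e3]
      -- from hmin': ‖q - a‖ + ‖b - q‖ ≤ ‖q' - a‖ + (1-s₀)‖b - q‖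
      rw [e4, hd1] at hmin'
      rw [hd2]
      linarith
    linarith
  have hwbtw : Wbtw ℝ a q q' := dist_add_dist_eq_iff.1 heq
  have hqseg : q ∈ segment ℝ a q' := by
    rw [← mem_segment_iff_wbtw] at hwbtw; exact hwbtw
  obtain ⟨t₁, t₂, ht₁, ht₂, hsum, hcomb⟩ := hqseg
  -- q = t₁ • a + t₂ • q', and q' = q + s₀ • (b - q)
  have hDq : (t₁ + t₂*s₀) • q = t₁ • a + (t₂*s₀) • b := by
    rw [hq'_def] at hcomb
    linear_combination (norm := module) -hcomb + hsum • q
  have hD : 0 < t₁ + t₂*s₀ := by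
    rcases ht₁.lt_or_eq with h | h
    · nlinarith [mul_nonneg ht₂ hs₀pos.le]
    · have ht₂1 : t₂ = 1 := by linarith
      rw [← h, ht₂1]; simpa using hs₀pos
  set D : ℝ := t₁ + t₂*s₀ with hD_def
  have hqmem : q ∈ segment ℝ a b := by
    refine ⟨t₁/D, (t₂*s₀)/D, div_nonneg ht₁ hD.le,
      div_nonneg (mul_nonneg ht₂ hs₀pos.le) hD.le, ?_, ?_⟩
    · field_simp; exact hD_def.symm
    · calc (t₁/D) • a + ((t₂*s₀)/D) • b = D⁻¹ • (t₁ • a + (t₂*s₀) • b) := by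
            rw [smul_add, smul_smul, smul_smul, div_eq_inv_mul, div_eq_inv_mul]
        _ = D⁻¹ • (D • q) := by rw [hDq]
        _ = q := inv_smul_smul₀ hD.ne' q
  have := hseg q hqmem
  rw [hq] at this
  exact lt_irrefl _ this


lemma min_reflect {r : ℝ} (hr : 0 < r) (c₀ a b q : E)
    (hq : ‖q - c₀‖ = r) (ha : r < ‖a - c₀‖) (hb : r < ‖b - c₀‖)
    (hseg : ∀ x ∈ segment ℝ a b, r < ‖x - c₀‖)
    (hmin : ∀ p : E, ‖p - c₀‖ = r → ‖q - a‖ + ‖q - b‖ ≤ ‖p - a‖ + ‖p - b‖) :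
    ‖b - q‖⁻¹ • (b - q) =
      ‖q - a‖⁻¹ • (q - a) -
        (2 * ⟪‖q - a‖⁻¹ • (q - a), r⁻¹ • (q - c₀)⟫) • (r⁻¹ • (q - c₀)) := by
  have haq : q ≠ a := by
    intro h; rw [← h] at ha; rw [hq] at ha; exact lt_irrefl _ ha
  have hbq : b ≠ q := by
    intro h; rw [h, hq] at hb; exact lt_irrefl _ hb
  set z : E := q - c₀ with hz_def
  set τ : E := rot2d z with hτ_def
  have hzτ : ⟪z, τ⟫ = 0 := inner_rot_self z
  have hττ : ⟪τ, τ⟫ = ⟪z, z⟫ := inner_rot_rot z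
  have hzn : ‖z‖ = r := hq
  have hzz : ⟪z, z⟫ = r^2 := by rw [real_inner_self_eq_norm_sq, hzn]
  set γ : ℝ → E := fun t => c₀ + Real.cos t • z + Real.sin t • τ with hγ_def
  have hγ0 : γ 0 = q := by
    simp only [hγ_def, Real.cos_zero, Real.sin_zero, one_smul, zero_smul, add_zero, hz_def]
    abel
  have hγsphere : ∀ t, ‖γ t - c₀‖ = r := by
    intro t
    have hx : γ t - c₀ = Real.cos t • z + Real.sin t • τ := by
      show c₀ + Real.cos t • z + Real.sin t • τ - c₀ = _; rw [add_assoc, add_sub_cancel_left]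
    apply norm_eq_of_sq_eq _ hr.le
    rw [hx, ← real_inner_self_eq_norm_sq]
    have hτz : ⟪τ, z⟫ = 0 := by rw [real_inner_comm]; exact hzτ
    simp only [inner_add_add_self, real_inner_smul_left, real_inner_smul_right,
      hττ, hzτ, hτz, mul_zero, add_zero, zero_add]
    have : Real.cos t ^2 + Real.sin t ^2 = 1 := by
      rw [← Real.sin_sq_add_cos_sq t]; ring
    nlinarith [hzz, this]
  have hγderiv : HasDerivAt γ τ 0 := by
    have h1 : HasDerivAt (fun t => Real.cos t • z) ((-Real.sin 0) • z) 0 :=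
      (Real.hasDerivAt_cos 0).smul_const z
    have h2 : HasDerivAt (fun t => Real.sin t • τ) ((Real.cos 0) • τ) 0 :=
      (Real.hasDerivAt_sin 0).smul_const τ
    have h3 := ((h1.add h2).const_add c₀)
    simp only [Real.sin_zero, Real.cos_zero, neg_zero, zero_smul, one_smul, zero_add] at h3
    have hfe : γ = fun t => c₀ + (Real.cos t • z + Real.sin t • τ) := by
      funext t; rw [hγ_def]; abel
    rw [hfe]; exact h3
  have hqc : ‖q - c₀‖ = r := hzn
  have hγa : γ 0 ≠ a := by rw [hγ0]; exact haq
  have hγb : γ 0 ≠ b := by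
    rw [hγ0]; intro h
    rw [← h] at hb; rw [hqc] at hb; exact lt_irrefl _ hb
  have hDa := hasDerivAt_norm_curve γ τ a hγderiv hγa
  have hDb := hasDerivAt_norm_curve γ τ b hγderiv hγb
  have hDsum : HasDerivAt (fun t => ‖γ t - a‖ + ‖γ t - b‖)
      (⟪γ 0 - a, τ⟫ / ‖γ 0 - a‖ + ⟪γ 0 - b, τ⟫ / ‖γ 0 - b‖) 0 := hDa.add hDb
  have hlocmin : IsLocalMin (fun t => ‖γ t - a‖ + ‖γ t - b‖) 0 := by
    apply Filter.Eventually.of_forall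
    intro t
    simp only [hγ0]
    exact hmin (γ t) (hγsphere t)
  have hzero := hlocmin.hasDerivAt_eq_zero hDsum
  rw [hγ0] at hzero
  rw [norm_sub_rev q b] at hzero
  set α : ℝ := ‖q - a‖ with hα_def
  set β : ℝ := ‖b - q‖ with hβ_def
  have hα : 0 < α := by rw [hα_def, norm_pos_iff]; exact sub_ne_zero.2 haq
  have hβ : 0 < β := by rw [hβ_def, norm_pos_iff]; exact sub_ne_zero.2 hbq
  set v : E := α⁻¹ • (q - a) with hv_def
  set u : E := β⁻¹ • (b - q) with hu_def
  have hwτ : ⟪v - u, τ⟫ = 0 := by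
    have h1 : ⟪q - b, τ⟫ = -⟪b - q, τ⟫ := by
      rw [show q - b = -(b - q) by abel, inner_neg_left]
    rw [h1] at hzero
    rw [hv_def, hu_def, inner_sub_left, real_inner_smul_left, real_inner_smul_left]
    field_simp at hzero ⊢
    linarith
  have hdecomp := two_dim_decomp z (v - u) hwτ
  rw [hzz] at hdecomp
  have hvnorm : ‖v‖ = 1 := by
    rw [hv_def, norm_smul, Real.norm_of_nonneg (inv_nonneg.2 hα.le), ← hα_def,
      inv_mul_cancel₀ hα.ne']
  have hunorm : ‖u‖ = 1 := by
    rw [hu_def, norm_smul, Real.norm_of_nonneg (inv_nonneg.2 hβ.le), ← hβ_def,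
      inv_mul_cancel₀ hβ.ne']
  have hperp : ⟪v + u, v - u⟫ = 0 := by
    have h2 : ⟪v + u, v - u⟫ = ‖v‖^2 - ‖u‖^2 := by
      rw [inner_sub_right, inner_add_left, inner_add_left, real_inner_self_eq_norm_sq,
        real_inner_self_eq_norm_sq, real_inner_comm u v]
      ring
    rw [h2, hvnorm, hunorm]; ring
  have hprod : ⟪v - u, z⟫ * ⟪v + u, z⟫ = 0 := by
    have h3 : ⟪v + u, (r^2 : ℝ) • (v - u)⟫ = ⟪v + u, (⟪v - u, z⟫ : ℝ) • z⟫ := by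
      rw [hdecomp]
    rw [real_inner_smul_right, real_inner_smul_right, hperp, mul_zero] at h3
    exact h3.symm
  rcases mul_eq_zero.1 hprod with hlam | hmid
  · -- λ = 0 : straight line through q, contradiction
    exfalso
    rw [hlam, zero_smul] at hdecomp
    have hvu : v = u := by
      have := smul_eq_zero.1 hdecomp
      rcases this with h | h
      · exfalso; exact (by positivity : (0:ℝ) < r^2).ne' h
      · exact sub_eq_zero.1 h
    have h1 : q - a = α • v := (smul_inv_smul₀ hα.ne' _).symm
    have h2 : b - q = β • v := by rw [hvu]; exact (smul_inv_smul₀ hβ.ne' _).symm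
    have hsum2 : (α + β) • q = β • a + α • b := by
      linear_combination (norm := module) β • h1 - α • h2
    have hαβ : 0 < α + β := by linarith
    have hqseg : q ∈ segment ℝ a b := by
      refine ⟨β/(α+β), α/(α+β), div_nonneg hβ.le hαβ.le, div_nonneg hα.le hαβ.le, ?_, ?_⟩
      · field_simp; ring
      · calc (β/(α+β)) • a + (α/(α+β)) • b = (α+β)⁻¹ • (β • a + α • b) := by
              rw [smul_add, smul_smul, smul_smul, div_eq_inv_mul, div_eq_inv_mul]
          _ = (α+β)⁻¹ • ((α+β) • q) := by rw [hsum2]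
          _ = q := inv_smul_smul₀ hαβ.ne' q
    have := hseg q hqseg
    rw [hqc] at this
    exact lt_irrefl _ this
  · -- reflection case
    have huz : ⟪u, z⟫ = -⟪v, z⟫ := by
      rw [inner_add_left] at hmid; linarith
    have hlam2 : ⟪v - u, z⟫ = 2 * ⟪v, z⟫ := by
      rw [inner_sub_left, huz]; ring
    have hw : v - u = ((2 * ⟪v, z⟫) / r^2) • z := by
      calc v - u = (r^2)⁻¹ • ((r^2) • (v - u)) := (inv_smul_smul₀ (by positivity) _).symm
        _ = (r^2)⁻¹ • (⟪v - u, z⟫ • z) := by rw [hdecomp]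
        _ = ((2 * ⟪v, z⟫) / r^2) • z := by
            rw [smul_smul, hlam2, div_eq_inv_mul, mul_comm]
    have hsc : (2 * ⟪v, r⁻¹ • z⟫) * r⁻¹ = (2 * ⟪v, z⟫) / r^2 := by
      rw [real_inner_smul_right]
      rw [div_eq_mul_inv]
      have : (r:ℝ)⁻¹ * r⁻¹ = (r^2)⁻¹ := by rw [pow_two, mul_inv]
      rw [← this]
      ring
    have hcoef : (2 * ⟪v, r⁻¹ • z⟫) • (r⁻¹ • z) = ((2 * ⟪v, z⟫) / r^2) • z := by
      rw [smul_smul, hsc]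
    rw [hcoef, ← hw]
    abel


section minimizerAux
variable {r₀ : ℝ} {c : Fin 3 → E} {ξ : ℕ → Fin 3}

lemma exists_min (hr₀ : 0 < r₀) (N : ℕ) :
    ∃ q ∈ {q : ℕ → E | ∀ n, q n ∈ Metric.sphere (c (ξ n)) r₀},
      IsMinOn (fun q : ℕ → E => ∑ i ∈ Finset.range N, ‖q (i+1) - q i‖)
        {q : ℕ → E | ∀ n, q n ∈ Metric.sphere (c (ξ n)) r₀} q := by
  have hset : {q : ℕ → E | ∀ n, q n ∈ Metric.sphere (c (ξ n)) r₀}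
      = Set.pi Set.univ (fun n => Metric.sphere (c (ξ n)) r₀) := by
    ext q; simp [Set.mem_pi]
  have hcpt : IsCompact {q : ℕ → E | ∀ n, q n ∈ Metric.sphere (c (ξ n)) r₀} := by
    rw [hset]; exact isCompact_univ_pi (fun n => isCompact_sphere _ _)
  have hne : {q : ℕ → E | ∀ n, q n ∈ Metric.sphere (c (ξ n)) r₀}.Nonempty := by
    have h : ∀ n : ℕ, (Metric.sphere (c (ξ n)) r₀).Nonempty := fun n =>
      NormedSpace.sphere_nonempty.2 hr₀.le
    exact ⟨fun n => (h n).choose, fun n => (h n).choose_spec⟩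
  have hcont : Continuous (fun q : ℕ → E => ∑ i ∈ Finset.range N, ‖q (i+1) - q i‖) :=
    continuous_finset_sum _ (fun i _ => ((continuous_apply (i+1)).sub (continuous_apply i)).norm)
  obtain ⟨q, hqK, hmin⟩ := hcpt.exists_isMinOn hne hcont.continuousOn
  exact ⟨q, hqK, hmin⟩

lemma variation {q : ℕ → E} {N : ℕ}
    (hqK : q ∈ {q : ℕ → E | ∀ n, q n ∈ Metric.sphere (c (ξ n)) r₀})
    (hmin : IsMinOn (fun q : ℕ → E => ∑ i ∈ Finset.range N, ‖q (i+1) - q i‖)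
        {q : ℕ → E | ∀ n, q n ∈ Metric.sphere (c (ξ n)) r₀} q)
    {m : ℕ} (hm1 : 1 ≤ m) (hmN : m + 1 ≤ N) (p : E) (hp : ‖p - c (ξ m)‖ = r₀) :
    ‖q m - q (m-1)‖ + ‖q m - q (m+1)‖ ≤ ‖p - q (m-1)‖ + ‖p - q (m+1)‖ := by
  classical
  set q' : ℕ → E := Function.update q m p with hq'_def
  have hq'K : q' ∈ {q : ℕ → E | ∀ n, q n ∈ Metric.sphere (c (ξ n)) r₀} := by
    intro n
    rcases eq_or_ne n m with rfl | hne
    · rw [hq'_def, Function.update_self]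
      rw [Metric.mem_sphere, dist_eq_norm]; exact hp
    · rw [hq'_def, Function.update_of_ne hne]; exact hqK n
  have hLL := hmin hq'K
  simp only [Set.mem_setOf_eq] at hLL
  -- sum splitting
  have hmltN : m < N := by omega
  have hm1ltN : m - 1 < N := by omega
  have hm1nem : m - 1 ≠ m := by omega
  have hmmem : m ∈ Finset.range N := Finset.mem_range.2 hmltN
  have hm1mem : m - 1 ∈ (Finset.range N).erase m :=
    Finset.mem_erase.2 ⟨hm1nem, Finset.mem_range.2 hm1ltN⟩
  have hsucc : m - 1 + 1 = m := by omega
  have key : ∀ f : ℕ → ℝ, ∑ i ∈ Finset.range N, f i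
      = ∑ i ∈ ((Finset.range N).erase m).erase (m-1), f i + f (m-1) + f m := by
    intro f
    rw [Finset.sum_erase_add _ _ hm1mem, Finset.sum_erase_add _ _ hmmem]
  have hcongr : ∀ i ∈ ((Finset.range N).erase m).erase (m-1),
      ‖q' (i+1) - q' i‖ = ‖q (i+1) - q i‖ := by
    intro i hi
    have hi1 : i ≠ m - 1 := (Finset.mem_erase.1 hi).1
    have hi2 : i ≠ m := (Finset.mem_erase.1 (Finset.mem_erase.1 hi).2).1
    have hi3 : i + 1 ≠ m := by omega
    rw [hq'_def, Function.update_of_ne hi2, Function.update_of_ne hi3]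
  have e1 : q' (m-1) = q (m-1) := by rw [hq'_def, Function.update_of_ne hm1nem]
  have e2 : q' m = p := by rw [hq'_def, Function.update_self]
  have e3 : q' (m+1) = q (m+1) := by rw [hq'_def, Function.update_of_ne (by omega)]
  have hsplit : ∑ i ∈ Finset.range N, ‖q' (i+1) - q' i‖
      = ∑ i ∈ ((Finset.range N).erase m).erase (m-1), ‖q (i+1) - q i‖
        + ‖p - q (m-1)‖ + ‖q (m+1) - p‖ := by
    rw [key (fun i => ‖q' (i+1) - q' i‖), Finset.sum_congr rfl hcongr]
    congr 2
    · rw [hsucc, e1, e2]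
    · rw [e2, e3]
  have hsplit2 : ∑ i ∈ Finset.range N, ‖q (i+1) - q i‖
      = ∑ i ∈ ((Finset.range N).erase m).erase (m-1), ‖q (i+1) - q i‖
        + ‖q m - q (m-1)‖ + ‖q (m+1) - q m‖ := by
    rw [key (fun i => ‖q (i+1) - q i‖)]
    congr 2
    rw [hsucc]
  rw [hsplit, hsplit2] at hLL
  have n1 : ‖q m - q (m+1)‖ = ‖q (m+1) - q m‖ := norm_sub_rev _ _
  have n2 : ‖p - q (m+1)‖ = ‖q (m+1) - p‖ := norm_sub_rev _ _
  rw [n1, n2]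
  linarith
end minimizerAux

lemma finite_stage {r₀ : ℝ} {c : Fin 3 → E} {ξ : ℕ → Fin 3}
    (hr : 0 < r₀) (hr1 : r₀ < 1)
    (hd : ∀ i j, i ≠ j → dist (c i) (c j) = 1 + 2 * r₀)
    (hξ : ∀ n, ξ n ≠ ξ (n + 1)) (N : ℕ) :
    ∃ q : ℕ → E, (∀ n, dist (q n) (c (ξ n)) = r₀) ∧
      ∀ m, 1 ≤ m → m + 1 ≤ N →
        (0 ≤ ⟪q m - c (ξ m), q (m+1) - q m⟫) ∧
        (0 ≤ ⟪q m - c (ξ m), q (m-1) - q m⟫) ∧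
        (‖q (m+1) - q m‖⁻¹ • (q (m+1) - q m) =
          ‖q m - q (m-1)‖⁻¹ • (q m - q (m-1)) -
            (2 * ⟪‖q m - q (m-1)‖⁻¹ • (q m - q (m-1)), r₀⁻¹ • (q m - c (ξ m))⟫) •
              (r₀⁻¹ • (q m - c (ξ m)))) := by
  obtain ⟨q, hqK, hmin⟩ := exists_min (c := c) (ξ := ξ) hr N
  have hdist : ∀ n, dist (q n) (c (ξ n)) = r₀ := fun n => Metric.mem_sphere.1 (hqK n)
  refine ⟨q, hdist, ?_⟩
  intro m hm1 hmN
  have hsucc : m - 1 + 1 = m := by omega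
  have hξa : ξ (m-1) ≠ ξ m := by
    have := hξ (m-1); rwa [hsucc] at this
  have hξb : ξ (m+1) ≠ ξ m := (hξ m).symm
  have hq : ‖q m - c (ξ m)‖ = r₀ := by rw [← dist_eq_norm]; exact hdist m
  have ha : r₀ < ‖q (m-1) - c (ξ m)‖ := lt_of_lt_of_le (by linarith) (far hr hd hξa (hdist (m-1)))
  have hb : r₀ < ‖q (m+1) - c (ξ m)‖ := lt_of_lt_of_le (by linarith) (far hr hd hξb (hdist (m+1)))
  have hseg : ∀ x ∈ segment ℝ (q (m-1)) (q (m+1)), r₀ < ‖x - c (ξ m)‖ := by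
    intro x hx
    have := nocross hr hr1 hd hξa hξb (hdist (m-1)) (hdist (m+1)) hx
    rwa [dist_eq_norm] at this
  have hmin' : ∀ p : E, ‖p - c (ξ m)‖ = r₀ →
      ‖q m - q (m-1)‖ + ‖q m - q (m+1)‖ ≤ ‖p - q (m-1)‖ + ‖p - q (m+1)‖ :=
    fun p hp => variation hqK hmin hm1 hmN p hp
  have hseg' : ∀ x ∈ segment ℝ (q (m+1)) (q (m-1)), r₀ < ‖x - c (ξ m)‖ := by
    intro x hx
    rw [segment_symm] at hx
    exact hseg x hx
  have hmin'' : ∀ p : E, ‖p - c (ξ m)‖ = r₀ →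
      ‖q m - q (m+1)‖ + ‖q m - q (m-1)‖ ≤ ‖p - q (m+1)‖ + ‖p - q (m-1)‖ := by
    intro p hp; have := hmin' p hp; linarith
  refine ⟨?_, ?_, ?_⟩
  · exact min_outgoing hr (c (ξ m)) (q (m-1)) (q (m+1)) (q m) hq hb hseg hmin'
  · exact min_outgoing hr (c (ξ m)) (q (m+1)) (q (m-1)) (q m) hq ha hseg' hmin''
  · exact min_reflect hr (c (ξ m)) (q (m-1)) (q (m+1)) (q m) hq ha hb hseg hmin'

lemma orbit_exists {r₀ : ℝ} {c : Fin 3 → E} {ξ : ℕ → Fin 3}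
    (hr : 0 < r₀) (hr1 : r₀ < 1)
    (hd : ∀ i j, i ≠ j → dist (c i) (c j) = 1 + 2 * r₀)
    (hξ : ∀ n, ξ n ≠ ξ (n + 1)) :
    ∃ q : ℕ → E, (∀ n, dist (q n) (c (ξ n)) = r₀) ∧
      ∀ m, 1 ≤ m →
        (0 ≤ ⟪q m - c (ξ m), q (m+1) - q m⟫) ∧
        (0 ≤ ⟪q m - c (ξ m), q (m-1) - q m⟫) ∧
        (‖q (m+1) - q m‖⁻¹ • (q (m+1) - q m) =
          ‖q m - q (m-1)‖⁻¹ • (q m - q (m-1)) -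
            (2 * ⟪‖q m - q (m-1)‖⁻¹ • (q m - q (m-1)), r₀⁻¹ • (q m - c (ξ m))⟫) •
              (r₀⁻¹ • (q m - c (ξ m)))) := by
  classical
  have hfs := fun N => finite_stage hr hr1 hd hξ N
  choose qs hdist hprops using hfs
  set K : Set (ℕ → E) := {q : ℕ → E | ∀ n, q n ∈ Metric.sphere (c (ξ n)) r₀} with hK_def
  have hKc : IsCompact K := by
    have hset : K = Set.pi Set.univ (fun n => Metric.sphere (c (ξ n)) r₀) := by
      ext q; simp [hK_def, Set.mem_pi]
    rw [hset]; exact isCompact_univ_pi (fun n => isCompact_sphere _ _)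
  have hqsK : ∀ N, qs N ∈ K := fun N n => Metric.mem_sphere.2 (hdist N n)
  obtain ⟨Q, hQK, φ, hφ, hconv⟩ := hKc.isSeqCompact hqsK
  have hpt : ∀ n, Filter.Tendsto (fun k => qs (φ k) n) Filter.atTop (nhds (Q n)) := by
    intro n
    exact (tendsto_pi_nhds.1 hconv) n
  have hQdist : ∀ n, dist (Q n) (c (ξ n)) = r₀ := fun n => Metric.mem_sphere.1 (hQK n)
  refine ⟨Q, hQdist, ?_⟩
  intro m hm
  have hev : ∀ᶠ k in Filter.atTop, m + 1 ≤ φ k := by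
    rw [Filter.eventually_atTop]
    exact ⟨m + 1, fun k hk => le_trans hk (hφ.le_apply)⟩
  -- tendsto building blocks
  have T0 : Filter.Tendsto (fun k => qs (φ k) m - c (ξ m)) Filter.atTop (nhds (Q m - c (ξ m))) :=
    (hpt m).sub tendsto_const_nhds
  have T1 : Filter.Tendsto (fun k => qs (φ k) (m+1) - qs (φ k) m) Filter.atTop
      (nhds (Q (m+1) - Q m)) := (hpt (m+1)).sub (hpt m)
  have T2 : Filter.Tendsto (fun k => qs (φ k) m - qs (φ k) (m-1)) Filter.atTop
      (nhds (Q m - Q (m-1))) := (hpt m).sub (hpt (m-1))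
  have hsucc : m - 1 + 1 = m := by omega
  -- nonvanishing of the limit gaps
  have gap : ∀ q ∈ K, ∀ n : ℕ, (1:ℝ) ≤ ‖q (n+1) - q n‖ := by
    intro q hqK n
    have h1 := circles_apart hr hd (hξ n) (Metric.mem_sphere.1 (hqK n))
      (Metric.mem_sphere.1 (hqK (n+1)))
    rw [dist_comm, dist_eq_norm] at h1
    exact h1
  have hg1 : ‖Q (m+1) - Q m‖ ≠ 0 := by
    have := gap Q hQK m; intro h; rw [h] at this; linarith
  have hg2 : ‖Q m - Q (m-1)‖ ≠ 0 := by
    have := gap Q hQK (m-1); rw [hsucc] at this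
    intro h; rw [h] at this; linarith
  constructor
  · refine ge_of_tendsto (T0.inner T1) ?_
    filter_upwards [hev] with k hk
    exact (hprops (φ k) m hm hk).1
  constructor
  · have T2' : Filter.Tendsto (fun k => qs (φ k) (m-1) - qs (φ k) m) Filter.atTop
        (nhds (Q (m-1) - Q m)) := (hpt (m-1)).sub (hpt m)
    refine ge_of_tendsto (T0.inner T2') ?_
    filter_upwards [hev] with k hk
    exact (hprops (φ k) m hm hk).2.1
  · -- reflection equation in the limit
    have evgap1 : ∀ k, (1:ℝ) ≤ ‖qs (φ k) (m+1) - qs (φ k) m‖ := fun k =>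
      gap (qs (φ k)) (hqsK (φ k)) m
    have Tdir1 : Filter.Tendsto
        (fun k => ‖qs (φ k) (m+1) - qs (φ k) m‖⁻¹ • (qs (φ k) (m+1) - qs (φ k) m))
        Filter.atTop (nhds (‖Q (m+1) - Q m‖⁻¹ • (Q (m+1) - Q m))) :=
      ((T1.norm.inv₀ hg1).smul T1)
    have Tdir2 : Filter.Tendsto
        (fun k => ‖qs (φ k) m - qs (φ k) (m-1)‖⁻¹ • (qs (φ k) m - qs (φ k) (m-1)))
        Filter.atTop (nhds (‖Q m - Q (m-1)‖⁻¹ • (Q m - Q (m-1)))) :=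
      ((T2.norm.inv₀ hg2).smul T2)
    have Tν : Filter.Tendsto (fun k => r₀⁻¹ • (qs (φ k) m - c (ξ m))) Filter.atTop
        (nhds (r₀⁻¹ • (Q m - c (ξ m)))) := T0.const_smul r₀⁻¹
    have Tinner : Filter.Tendsto
        (fun k => (2:ℝ) * ⟪‖qs (φ k) m - qs (φ k) (m-1)‖⁻¹ • (qs (φ k) m - qs (φ k) (m-1)),
          r₀⁻¹ • (qs (φ k) m - c (ξ m))⟫) Filter.atTop
        (nhds ((2:ℝ) * ⟪‖Q m - Q (m-1)‖⁻¹ • (Q m - Q (m-1)), r₀⁻¹ • (Q m - c (ξ m))⟫)) :=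
      (Tdir2.inner Tν).const_mul 2
    have TRHS : Filter.Tendsto
        (fun k => ‖qs (φ k) m - qs (φ k) (m-1)‖⁻¹ • (qs (φ k) m - qs (φ k) (m-1)) -
          ((2:ℝ) * ⟪‖qs (φ k) m - qs (φ k) (m-1)‖⁻¹ • (qs (φ k) m - qs (φ k) (m-1)),
            r₀⁻¹ • (qs (φ k) m - c (ξ m))⟫) • (r₀⁻¹ • (qs (φ k) m - c (ξ m))))
        Filter.atTop
        (nhds (‖Q m - Q (m-1)‖⁻¹ • (Q m - Q (m-1)) -
          ((2:ℝ) * ⟪‖Q m - Q (m-1)‖⁻¹ • (Q m - Q (m-1)), r₀⁻¹ • (Q m - c (ξ m))⟫) •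
            (r₀⁻¹ • (Q m - c (ξ m))))) :=
      Tdir2.sub (Tinner.smul Tν)
    have hevEq : ∀ᶠ k in Filter.atTop,
        ‖qs (φ k) (m+1) - qs (φ k) m‖⁻¹ • (qs (φ k) (m+1) - qs (φ k) m) =
        ‖qs (φ k) m - qs (φ k) (m-1)‖⁻¹ • (qs (φ k) m - qs (φ k) (m-1)) -
          ((2:ℝ) * ⟪‖qs (φ k) m - qs (φ k) (m-1)‖⁻¹ • (qs (φ k) m - qs (φ k) (m-1)),
            r₀⁻¹ • (qs (φ k) m - c (ξ m))⟫) • (r₀⁻¹ • (qs (φ k) m - c (ξ m))) := by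
      filter_upwards [hev] with k hk
      exact (hprops (φ k) m hm hk).2.2
    exact tendsto_nhds_unique (Tdir1.congr' hevEq) TRHS

end BilliardAux

/-- For every admissible symbolic sequence `ξ` there exists a billiard geodesic bouncing
successively on the circles `C^{ξ₀}, C^{ξ₁}, …`: a sequence of bounce points `q_n ∈ C^{ξ_n}`
whose consecutive open segments avoid the three closed disks, and which satisfies the
reflection law at every bounce. -/
theorem statement_11 (r₀ : ℝ) (c : Fin 3 → EuclideanSpace ℝ (Fin 2))
    (hc : ThreeCircleConfig r₀ c)
    (ξ : ℕ → Fin 3) (hξ : ∀ n, ξ n ≠ ξ (n + 1)) :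
    ∃ q : ℕ → EuclideanSpace ℝ (Fin 2),
      (∀ n, dist (q n) (c (ξ n)) = r₀) ∧
      (∀ n, ∀ s ∈ Set.Ioo (0 : ℝ) 1, ∀ j : Fin 3,
        r₀ < dist ((1 - s) • q n + s • q (n + 1)) (c j)) ∧
      (∀ n : ℕ,
        ‖q (n + 2) - q (n + 1)‖⁻¹ • (q (n + 2) - q (n + 1)) =
          ‖q (n + 1) - q n‖⁻¹ • (q (n + 1) - q n) -
            (2 * ⟪‖q (n + 1) - q n‖⁻¹ • (q (n + 1) - q n),
                  r₀⁻¹ • (q (n + 1) - c (ξ (n + 1)))⟫) •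
              (r₀⁻¹ • (q (n + 1) - c (ξ (n + 1))))) := by
  obtain ⟨hr, hr1, hd⟩ := hc
  -- extend the symbolic sequence one step into the past
  have hξ' : ∀ n, (fun n => match n with | 0 => ξ 1 | (m+1) => ξ m) n
      ≠ (fun n => match n with | 0 => ξ 1 | (m+1) => ξ m) (n+1) := by
    intro n
    cases n with
    | zero => exact (hξ 0).symm
    | succ k => exact hξ k
  obtain ⟨Q, hQdist, hQprops⟩ := orbit_exists hr hr1 hd hξ'
  refine ⟨fun n => Q (n+1), ?_, ?_, ?_⟩
  · intro n
    exact hQdist (n+1)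
  · intro n s hs j
    have hp : dist (Q (n+1)) (c (ξ n)) = r₀ := hQdist (n+1)
    have hp' : dist (Q (n+2)) (c (ξ (n+1))) = r₀ := hQdist (n+2)
    have h1 : 0 ≤ ⟪Q (n+1) - c (ξ n), Q (n+2) - Q (n+1)⟫ :=
      (hQprops (n+1) (by omega)).1
    have h2 : 0 ≤ ⟪Q (n+2) - c (ξ (n+1)), Q (n+1) - Q (n+2)⟫ :=
      (hQprops (n+2) (by omega)).2.1
    exact seg_strict hr hr1 hd (hξ n) hp hp' h1 h2 hs j
  · intro n
    exact (hQprops (n+2) (by omega)).2.2
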